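/- arXiv:2406.17820 — 2 statements merged into one kernel-verified Lean document; each statement's English description precedes it below -/
import Mathlib

section
/- If G is a simple graph on n vertices that contains no doubly chorded cycle, then G has a vertex of degree at most 2. -/
open SimpleGraph

/-- A chord of the cycle `c` in `G`: an edge of `G` whose endpoints lie on `c`
but which is not itself an edge of `c`. -/
def IsChord {V : Type*} (G : SimpleGraph V) {v : V} (c : G.Walk v v) (e : Sym2 V) : Prop :=
  e ∈ G.edgeSet ∧ e ∉ c.edges ∧ ∀ x ∈ e, x ∈ c.support

/-- `G` contains a doubly chorded cycle: a cycle with at least two chords. -/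
def HasDCC {V : Type*} (G : SimpleGraph V) : Prop :=
  ∃ (v : V) (c : G.Walk v v), c.IsCycle ∧
    ∃ e₁ e₂ : Sym2 V, e₁ ≠ e₂ ∧ IsChord G c e₁ ∧ IsChord G c e₂

/-- `G` contains a cycle with two chords incident to a common vertex. -/
def HasDCC1 {V : Type*} (G : SimpleGraph V) : Prop :=
  ∃ (v : V) (c : G.Walk v v), c.IsCycle ∧
    ∃ e₁ e₂ : Sym2 V, e₁ ≠ e₂ ∧ IsChord G c e₁ ∧ IsChord G c e₂ ∧
      ∃ w : V, w ∈ e₁ ∧ w ∈ e₂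

/-!
Suppose every vertex has degree at least 3 and let `x₀ x₁ … x_L` be a longest path. All
neighbours of `x₀` lie on it; pick two of them, `x_a` and `x_b` with `2 ≤ a < b`. Rotating at
the edge `x₀ x_a` gives the path `x_{a-1} … x₀ x_a … x_L`, again longest, so the third neighbour
`x_j` of `x_{a-1}` also lies on the path. If `j ≤ b`, the cycle `x₀ … x_b x₀` has the chords
`x₀ x_a` and `x_{a-1} x_j`; if `j > b`, the cycle `x_{a-1} … x₀ x_a … x_j x_{a-1}` closed along the
rotated path has the chords `x_{a-1} x_a` and `x₀ x_b`.
-/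

namespace SimpleGraph.Walk

variable {V : Type*} {G : SimpleGraph V} {u v : V}

lemma IsPath.mk_getVert_eq_mk_getVert_iff {p : G.Walk u v} (hp : p.IsPath) {a b c d : ℕ}
    (ha : a ≤ p.length) (hb : b ≤ p.length) (hc : c ≤ p.length) (hd : d ≤ p.length) :
    s(p.getVert a, p.getVert b) = s(p.getVert c, p.getVert d) ↔
      a = c ∧ b = d ∨ a = d ∧ b = c := by
  refine ⟨fun h => ?_, by rintro (⟨rfl, rfl⟩ | ⟨rfl, rfl⟩) <;> simp⟩
  have inj := hp.getVert_injOn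
  rcases Sym2.eq_iff.mp h with ⟨h₁, h₂⟩ | ⟨h₁, h₂⟩
  · exact .inl ⟨inj ha hc h₁, inj hb hd h₂⟩
  · exact .inr ⟨inj ha hd h₁, inj hb hc h₂⟩

lemma exists_mk_getVert_eq_of_mem_edges_take (p : G.Walk u v) {k : ℕ} (hk : k ≤ p.length)
    {x y : V} (he : s(x, y) ∈ (p.take k).edges) :
    ∃ l < k, s(p.getVert l, p.getVert (l + 1)) = s(x, y) := by
  obtain ⟨l, hl, hxy⟩ := (p.take k).mk_mem_edges_iff_exists.mp he
  rw [take_length] at hl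
  rw [take_getVert, take_getVert, min_eq_right (by omega), min_eq_right (by omega)] at hxy
  exact ⟨l, by omega, hxy⟩

def IsLongest (p : G.Walk u v) : Prop :=
  ∀ (x y : V) (q : G.Walk x y), q.IsPath → q.length ≤ p.length

lemma IsLongest.exists_getVert_eq_of_adj {p : G.Walk u v} (hp : p.IsPath) (hl : p.IsLongest)
    {w : V} (hw : G.Adj u w) : ∃ i, 0 < i ∧ i ≤ p.length ∧ p.getVert i = w := by
  have hmem : w ∈ p.support := by
    by_contra hw'
    have := hl _ _ _ ((cons_isPath_iff hw.symm p).mpr ⟨hp, hw'⟩)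
    simp at this
  obtain ⟨i, rfl, hi⟩ := mem_support_iff_exists_getVert.mp hmem
  refine ⟨i, Nat.pos_of_ne_zero fun h => ?_, hi, rfl⟩
  subst h
  exact hw.ne p.getVert_zero.symm

/-- `(i, j)` indexes a chord of the cycle `p.getVert 0, …, p.getVert k, p.getVert 0`. -/
def IsPrefixChord (p : G.Walk u v) (k i j : ℕ) : Prop :=
  i + 1 < j ∧ j ≤ k ∧ (i = 0 → j < k) ∧ G.Adj (p.getVert i) (p.getVert j)

variable {p : G.Walk u v}

lemma IsPath.isCycle_cons_take (hp : p.IsPath) {k : ℕ} (hk₂ : 2 ≤ k) (hk : k ≤ p.length)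
    (h : G.Adj (p.getVert k) u) : (cons h (p.take k)).IsCycle := by
  refine (cons_isCycle_iff _ h).mpr ⟨hp.take k, fun he => ?_⟩
  obtain ⟨l, hl, hkl⟩ := p.exists_mk_getVert_eq_of_mem_edges_take hk he
  have := (hp.mk_getVert_eq_mk_getVert_iff (by omega) (by omega) hk (Nat.zero_le _)).mp
    (hkl.trans (by rw [p.getVert_zero]))
  omega

lemma IsPath.exists_rotation (hp : p.IsPath) {a : ℕ} (ha : 0 < a) (ha' : a ≤ p.length)
    (h : G.Adj u (p.getVert a)) :
    ∃ q : G.Walk (p.getVert (a - 1)) v, q.IsPath ∧ q.length = p.length ∧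
      ∀ i, q.getVert i = p.getVert (if i < a then a - 1 - i else i) := by
  set q := (p.take (a - 1)).reverse.append (cons h (p.drop a))
  have hlen : q.length = p.length := by
    simp only [q, length_append, length_reverse, take_length, length_cons, drop_length]
    omega
  have hget : ∀ i, q.getVert i = p.getVert (if i < a then a - 1 - i else i) := by
    intro i
    simp only [q, getVert_append, getVert_reverse, take_getVert, length_reverse, take_length,
      min_eq_left (show a - 1 ≤ p.length by omega)]
    split_ifs with h₁ h₂ h₂
    · congr 1; omega
    · omega
    · rw [show i - (a - 1) = 0 by omega, show a - 1 - i = 0 by omega, getVert_zero, getVert_zero]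
    · rw [show i - (a - 1) = i - a + 1 by omega, getVert_cons_succ, drop_getVert]
      congr 1; omega
  refine ⟨q, (IsPath.getVert_injOn_iff q).mp fun i hi j hj hij => ?_, hlen, hget⟩
  simp only [Set.mem_ofPred_eq, hlen] at hi hj
  rw [hget, hget] at hij
  have := hp.getVert_injOn (by simp only [Set.mem_ofPred_eq]; split_ifs <;> omega)
    (by simp only [Set.mem_ofPred_eq]; split_ifs <;> omega) hij
  split_ifs at this <;> omega

end SimpleGraph.Walk

lemma SimpleGraph.exists_adj_ne_ne_of_two_lt_degree {V : Type*} {G : SimpleGraph V} {v : V}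
    [Fintype (G.neighborSet v)] (h : 2 < G.degree v) (a b : V) :
    ∃ w, G.Adj v w ∧ w ≠ a ∧ w ≠ b := by
  classical
  have hcard : ({a, b} : Finset V).card < (G.neighborFinset v).card :=
    Finset.card_le_two.trans_lt (G.card_neighborFinset_eq_degree v ▸ h)
  obtain ⟨w, hw, hwab⟩ := Finset.exists_mem_notMem_of_card_lt_card hcard
  simp only [Finset.mem_insert, Finset.mem_singleton, not_or] at hwab
  exact ⟨w, (G.mem_neighborFinset v w).mp hw, hwab⟩

section

variable {V : Type*} {G : SimpleGraph V} {u v : V} {p : G.Walk u v} {k : ℕ}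

lemma isChord_cons_take (hp : p.IsPath) (hk : k ≤ p.length) (h : G.Adj (p.getVert k) u)
    {i j : ℕ} (hc : p.IsPrefixChord k i j) :
    IsChord G (Walk.cons h (p.take k)) s(p.getVert i, p.getVert j) := by
  obtain ⟨hij, hjk, hi₀, hadj⟩ := hc
  refine ⟨hadj, fun he => ?_, fun x hx => ?_⟩
  · rcases List.mem_cons.mp (Walk.edges_cons h _ ▸ he) with he | he
    · have := (hp.mk_getVert_eq_mk_getVert_iff (by omega) (by omega) hk (Nat.zero_le _)).mp
        (he.trans (by rw [p.getVert_zero]))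
      omega
    · obtain ⟨l, hl, hlij⟩ := p.exists_mk_getVert_eq_of_mem_edges_take hk he
      have := (hp.mk_getVert_eq_mk_getVert_iff (by omega) (by omega) (by omega) (by omega)).mp
        hlij
      omega
  · have hmem : ∀ n ≤ k, p.getVert n ∈ (p.take k).support := fun n hn => by
      simpa [min_eq_right hn] using (p.take k).getVert_mem_support n
    rw [Walk.support_cons]
    rcases Sym2.mem_iff.mp hx with rfl | rfl
    · exact List.mem_cons_of_mem _ (hmem i (by omega))
    · exact List.mem_cons_of_mem _ (hmem j hjk)

theorem hasDCC_of_isPrefixChord (hp : p.IsPath) (hk : k ≤ p.length)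
    (h : G.Adj (p.getVert k) u) {i₁ j₁ i₂ j₂ : ℕ} (hc₁ : p.IsPrefixChord k i₁ j₁)
    (hc₂ : p.IsPrefixChord k i₂ j₂) (hne : (i₁, j₁) ≠ (i₂, j₂)) : HasDCC G := by
  have ⟨hij₁, hjk₁, _⟩ := hc₁
  have ⟨hij₂, hjk₂, _⟩ := hc₂
  refine ⟨_, _, hp.isCycle_cons_take (by omega) hk h, _, _, fun he => hne ?_,
    isChord_cons_take hp hk h hc₁, isChord_cons_take hp hk h hc₂⟩
  have := (hp.mk_getVert_eq_mk_getVert_iff (by omega) (by omega) (by omega) (by omega)).mp he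
  simp only [Prod.mk.injEq]
  omega

theorem hasDCC_of_adj_getVert_of_adj_getVert (hp : p.IsPath) (hl : p.IsLongest)
    (hdeg : ∀ x y z : V, ∃ w, G.Adj x w ∧ w ≠ y ∧ w ≠ z) {a b : ℕ} (ha : 2 ≤ a) (hab : a < b)
    (hb : b ≤ p.length) (hua : G.Adj u (p.getVert a)) (hub : G.Adj u (p.getVert b)) :
    HasDCC G := by
  obtain ⟨q, hq, hqlen, hqget⟩ := hp.exists_rotation (by omega) (by omega) hua
  have hql : q.IsLongest := fun x y r hr => hqlen ▸ hl x y r hr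
  obtain ⟨w, hw, hw₁, hw₂⟩ := hdeg (p.getVert (a - 1)) (p.getVert (a - 2)) (p.getVert a)
  obtain ⟨j, hjL, rfl⟩ : ∃ j ≤ p.length, p.getVert j = w := by
    obtain ⟨t, -, ht, rfl⟩ := hql.exists_getVert_eq_of_adj hq hw
    exact ⟨_, by split_ifs <;> omega, (hqget t).symm⟩
  have hj₀ : j ≠ a - 1 := fun h => hw.ne (h ▸ rfl)
  have hj₁ : j ≠ a - 2 := fun h => hw₁ (h ▸ rfl)
  have hj₂ : j ≠ a := fun h => hw₂ (h ▸ rfl)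
  have hc : p.IsPrefixChord b 0 a := ⟨by omega, by omega, fun _ => hab, by rwa [p.getVert_zero]⟩
  rcases le_or_gt j b with hjb | hjb
  · rcases Nat.lt_or_gt_of_ne hj₀ with hj | hj
    · exact hasDCC_of_isPrefixChord hp hb hub.symm hc
        ⟨by omega, by omega, by omega, hw.symm⟩ (by simp only [ne_eq, Prod.mk.injEq]; omega)
    · exact hasDCC_of_isPrefixChord hp hb hub.symm hc
        ⟨by omega, hjb, by omega, hw⟩ (by simp only [ne_eq, Prod.mk.injEq]; omega)
  · have hqj : q.getVert j = p.getVert j := by rw [hqget, if_neg (by omega)]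
    have hqa : G.Adj (q.getVert 0) (q.getVert a) := by
      rw [hqget, hqget, if_pos (by omega), if_neg (by omega), Nat.sub_zero]
      simpa [Nat.sub_add_cancel (by omega : 1 ≤ a)] using
        p.adj_getVert_succ (by omega : a - 1 < p.length)
    have hqb : G.Adj (q.getVert (a - 1)) (q.getVert b) := by
      rw [hqget, hqget, if_pos (by omega), if_neg (by omega), Nat.sub_self, p.getVert_zero]
      exact hub
    exact hasDCC_of_isPrefixChord hq (k := j) (by omega) (hqj ▸ hw.symm)
      ⟨by omega, by omega, fun _ => by omega, hqa⟩ ⟨by omega, by omega, by omega, hqb⟩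
      (by simp only [ne_eq, Prod.mk.injEq]; omega)

theorem hasDCC_of_forall_exists_adj_ne_ne [Finite V] [Nonempty V]
    (hdeg : ∀ x y z : V, ∃ w, G.Adj x w ∧ w ≠ y ∧ w ≠ z) : HasDCC G := by
  obtain ⟨u, v, p, hp, hl⟩ := Walk.exists_isPath_forall_isPath_length_le_length G
  replace hl : p.IsLongest := fun x y q hq => hl x y q hq
  obtain ⟨w₁, hw₁, hw₁₁, -⟩ := hdeg u (p.getVert 1) (p.getVert 1)
  obtain ⟨w₂, hw₂, hw₂₁, hw₂₂⟩ := hdeg u (p.getVert 1) w₁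
  obtain ⟨a, ha, haL, rfl⟩ := hl.exists_getVert_eq_of_adj hp hw₁
  obtain ⟨b, hb, hbL, rfl⟩ := hl.exists_getVert_eq_of_adj hp hw₂
  have ha₁ : a ≠ 1 := fun h => hw₁₁ (h ▸ rfl)
  have hb₁ : b ≠ 1 := fun h => hw₂₁ (h ▸ rfl)
  have hab : a ≠ b := fun h => hw₂₂ (h ▸ rfl)
  rcases Nat.lt_or_gt_of_ne hab with h | h
  · exact hasDCC_of_adj_getVert_of_adj_getVert hp hl hdeg (by omega) h hbL hw₁ hw₂
  · exact hasDCC_of_adj_getVert_of_adj_getVert hp hl hdeg (by omega) h haL hw₂ hw₁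

end

theorem no_dcc_min_degree (n : ℕ) (hn : 0 < n) (G : SimpleGraph (Fin n))
    [DecidableRel G.Adj] (h : ¬ HasDCC G) : ∃ v : Fin n, G.degree v ≤ 2 := by
  have : Nonempty (Fin n) := ⟨⟨0, hn⟩⟩
  by_contra! hdeg
  exact h (hasDCC_of_forall_exists_adj_ne_ne fun x => exists_adj_ne_ne_of_two_lt_degree (hdeg x))
end

section
/- For n ≥ 8 with n ≡ 2 (mod 3), the spectral radius of K_1 ∨ (K_1 ∪ ((n-2)/3)K_3) is strictly less than sqrt(3(n-3)). -/
open SimpleGraph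

/-- The spectral radius of a graph: the largest eigenvalue of its adjacency matrix. -/
noncomputable def adjSpecRad {V : Type*} [Fintype V] [DecidableEq V] (G : SimpleGraph V) : ℝ :=
  letI := Classical.decRel G.Adj
  ⨆ i, (Matrix.IsHermitian.eigenvalues
    (by
      ext i j
      simp [Matrix.conjTranspose_apply, SimpleGraph.adjMatrix, G.adj_comm i j]
      : (G.adjMatrix ℝ).IsHermitian)) i

/-- `K_1 ∨ (K_1 ∪ k K_3)` on `Fin n` (for `n ≡ 2 mod 3`): vertex `0` joined to the
single vertex `1` and the disjoint triangles `{2,3,4}, {5,6,7}, …`. -/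
def K1JoinK1Triangles (n : ℕ) : SimpleGraph (Fin n) where
  Adj v w := v ≠ w ∧ (v.val = 0 ∨ w.val = 0 ∨ (v.val + 1) / 3 = (w.val + 1) / 3)
  symm := ⟨by intro v w h; exact ⟨h.1.symm, by tauto⟩⟩
  loopless := ⟨fun v h => h.1 rfl⟩


/-!
Weight the vertex `0` by `√n - 1` and every other vertex by `1`. Vertex `0` then sees total
weight `n - 1 = (√n + 1)(√n - 1)`, and any other vertex sees at most `(√n - 1) + 2`, since
besides `0` it is adjacent only to the two other vertices of its triangle. By the
Collatz–Wielandt bound the spectral radius is at most `1 + √n`, which is below `√(3(n - 3))`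
as soon as `n ≥ 8`.
-/

open Matrix Finset

theorem Matrix.abs_le_of_mulVec_eq_smul_of_mulVec_le {ι : Type*} [Fintype ι]
    {A : Matrix ι ι ℝ} (hA : ∀ i j, 0 ≤ A i j) {y : ι → ℝ} (hy : ∀ i, 0 < y i) {t : ℝ}
    (hAy : A *ᵥ y ≤ t • y) {μ : ℝ} {x : ι → ℝ} (hx : x ≠ 0) (hAx : A *ᵥ x = μ • x) :
    |μ| ≤ t := by
  obtain ⟨i₀, -⟩ := Function.ne_iff.1 hx
  have : Nonempty ι := ⟨i₀⟩
  obtain ⟨i, hi⟩ := Finite.exists_max fun j => |x j| / y j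
  set c := |x i| / y i
  have hxy : ∀ j, |x j| ≤ c * y j := fun j => (div_le_iff₀ (hy j)).1 (hi j)
  have hxi : 0 < |x i| := by
    by_contra! h
    have hc : c = 0 := by simp [c, le_antisymm h (abs_nonneg _)]
    exact hx (funext fun j => abs_nonpos_iff.1 (by simpa [hc] using hxy j))
  have key : |μ| * |x i| ≤ t * |x i| :=
    calc |μ| * |x i| = |∑ j, A i j * x j| := by
          rw [← abs_mul, ← smul_eq_mul, ← Pi.smul_apply, ← hAx]; rfl
      _ ≤ ∑ j, A i j * |x j| := by
          refine (abs_sum_le_sum_abs _ _).trans_eq (sum_congr rfl fun j _ => ?_)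
          rw [abs_mul, abs_of_nonneg (hA i j)]
      _ ≤ ∑ j, A i j * (c * y j) :=
          sum_le_sum fun j _ => mul_le_mul_of_nonneg_left (hxy j) (hA i j)
      _ = c * (A *ᵥ y) i := by
          simp only [mulVec, dotProduct, mul_sum]
          exact sum_congr rfl fun j _ => by ring
      _ ≤ c * (t * y i) :=
          mul_le_mul_of_nonneg_left (hAy i) (div_nonneg (abs_nonneg _) (hy i).le)
      _ = t * |x i| := by
          simp only [c]
          field_simp [(hy i).ne']
  exact le_of_mul_le_mul_right key hxi

theorem adjSpecRad_le_of_sum_neighborFinset_le {V : Type*} [Fintype V] [DecidableEq V]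
    [Nonempty V] (G : SimpleGraph V) [DecidableRel G.Adj] {y : V → ℝ} (hy : ∀ v, 0 < y v)
    {t : ℝ} (hGy : ∀ v, ∑ u ∈ G.neighborFinset v, y u ≤ t * y v) :
    adjSpecRad G ≤ t := by
  obtain rfl : ‹DecidableRel G.Adj› = Classical.decRel G.Adj := Subsingleton.elim _ _
  refine ciSup_le fun i => (le_abs_self _).trans ?_
  refine Matrix.abs_le_of_mulVec_eq_smul_of_mulVec_le (fun v w => ?_) hy
    (fun v => ?_) ?_ (IsHermitian.mulVec_eigenvectorBasis _ i)
  · rw [adjMatrix_apply]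
    split_ifs <;> norm_num
  · simpa only [adjMatrix_mulVec_apply, Pi.smul_apply, smul_eq_mul] using hGy v
  · intro h
    exact (IsHermitian.eigenvectorBasis _).orthonormal.ne_zero i
      (WithLp.ofLp_injective 2 (h.trans (WithLp.ofLp_zero 2).symm))

theorem adjSpecRad_le_of_card_neighborFinset_erase_le {V : Type*} [Fintype V]
    [DecidableEq V] (G : SimpleGraph V) [DecidableRel G.Adj] (z : V) {d : ℕ}
    (hd : ∀ v ≠ z, #((G.neighborFinset v).erase z) ≤ d) {t : ℝ} (hdt : d < t)
    (ht : (Fintype.card V : ℝ) - 1 ≤ t * (t - d)) :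
    adjSpecRad G ≤ t := by
  have : Nonempty V := ⟨z⟩
  set y : V → ℝ := fun v => if v = z then t - d else 1
  have hyz : y z = t - d := if_pos rfl
  have hy_ne : ∀ s : Finset V, z ∉ s → ∑ u ∈ s, y u = #s := fun s hs => by
    rw [sum_congr rfl fun u hu => if_neg (ne_of_mem_of_not_mem hu hs), sum_const,
      nsmul_one]
  refine adjSpecRad_le_of_sum_neighborFinset_le G (y := y)
    (fun v => by dsimp only [y]; split_ifs <;> linarith) fun v => ?_
  by_cases hv : v = z
  · subst hv
    rw [hy_ne _ (G.notMem_neighborFinset_self v), card_neighborFinset_eq_degree, hyz]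
    have : (G.degree v : ℝ) ≤ Fintype.card V - 1 := by
      rw [le_sub_iff_add_le]; exact_mod_cast G.degree_lt_card_verts v
    linarith
  · calc ∑ u ∈ G.neighborFinset v, y u
        ≤ ∑ u ∈ insert z ((G.neighborFinset v).erase z), y u :=
          sum_le_sum_of_subset_of_nonneg (insert_erase_subset _ _)
            fun u _ _ => by dsimp only [y]; split_ifs <;> linarith
      _ = (t - d) + #((G.neighborFinset v).erase z) := by
          rw [sum_insert (notMem_erase _ _), hy_ne _ (notMem_erase _ _), hyz]
      _ ≤ t * y v := by
          rw [show y v = 1 from if_neg hv, mul_one]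
          have : (#((G.neighborFinset v).erase z) : ℝ) ≤ d := by exact_mod_cast hd v hv
          linarith

instance (n : ℕ) : DecidableRel (K1JoinK1Triangles n).Adj := fun v w =>
  inferInstanceAs (Decidable (v ≠ w ∧ _))

theorem card_neighborFinset_erase_le_K1JoinK1Triangles {n : ℕ} {z : Fin n} (hz : z.val = 0)
    {v : Fin n} (hv : v ≠ z) :
    #(((K1JoinK1Triangles n).neighborFinset v).erase z) ≤ 2 := by
  have hv0 : v.val ≠ 0 := fun h => hv (Fin.ext (h.trans hz.symm))
  set q := (v.val + 1) / 3
  calc #(((K1JoinK1Triangles n).neighborFinset v).erase z)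
      ≤ #((Ico (3 * q) (3 * q + 3)).erase (v.val + 1)) := by
        refine card_le_card_of_injOn (fun u => u.val + 1) (fun u hu => ?_)
          fun u _ w _ h => Fin.ext (by simpa using h)
        obtain ⟨huz, hu⟩ := mem_erase.1 hu
        obtain ⟨hvu, hadj⟩ := (mem_neighborFinset _ _ _).1 hu
        have hu0 : u.val ≠ 0 := fun h => huz (Fin.ext (h.trans hz.symm))
        have hvu' : v.val ≠ u.val := Fin.val_ne_of_ne hvu
        simp only [coe_erase, Set.mem_sdiff, coe_Ico, Set.mem_Ico, Set.mem_singleton_iff]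
        omega
    _ = 2 := by rw [card_erase_of_mem (mem_Ico.2 (by omega)), Nat.card_Ico]; omega

theorem one_add_sqrt_lt_sqrt_three_mul_sub_three {x : ℝ} (hx : 8 ≤ x) :
    1 + √x < √(3 * (x - 3)) := by
  have hsx : √x < x - 5 := (Real.sqrt_lt' (by linarith)).2 (by nlinarith)
  refine (Real.lt_sqrt (by positivity)).2 ?_
  nlinarith [Real.sq_sqrt (show 0 ≤ x by linarith)]

theorem specRad_K1_join_K1_triangles_lt_general (n : ℕ) (hn : 8 ≤ n) :
    adjSpecRad (K1JoinK1Triangles n) < Real.sqrt (3 * ((n : ℝ) - 3)) := by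
  have hnR : (8 : ℝ) ≤ n := by exact_mod_cast hn
  have hs : 1 < √(n : ℝ) := Real.lt_sqrt_of_sq_lt (by linarith)
  calc adjSpecRad (K1JoinK1Triangles n) ≤ 1 + √(n : ℝ) := by
        refine adjSpecRad_le_of_card_neighborFinset_erase_le _ ⟨0, by omega⟩ (d := 2)
          (fun v hv => card_neighborFinset_erase_le_K1JoinK1Triangles rfl hv) ?_ ?_
        · push_cast; linarith
        · rw [Fintype.card_fin]
          push_cast
          nlinarith [Real.sq_sqrt (Nat.cast_nonneg (α := ℝ) n)]
    _ < √(3 * ((n : ℝ) - 3)) := one_add_sqrt_lt_sqrt_three_mul_sub_three hnR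

theorem specRad_K1_join_K1_triangles_lt (n : ℕ) (hn : 8 ≤ n) (h3 : n % 3 = 2) :
    adjSpecRad (K1JoinK1Triangles n) < Real.sqrt (3 * ((n : ℝ) - 3)) :=
  specRad_K1_join_K1_triangles_lt_general n hn
end
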